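/- UI vanishes iff Blackwell degradation: for a joint distribution P of (S,Y,Z) with P_S of full support, min_{Q ∈ Δ_P} I_Q(S;Y|Z) = 0 if and only if there exists a channel λ : Z → P(Y) such that P_{Y|S=s}(y) = Σ_z λ_z(y) P_{Z|S=s}(z) for all s, y (i.e., Y is a degradation of Z with respect to S). -/

import Mathlib

open Finset Real

section Defs
variable {α β γ : Type*} [Fintype α] [Fintype β] [Fintype γ]

/-- `p` is a probability distribution on a finite type. -/
def IsDist (p : α → ℝ) : Prop := (∀ a, 0 ≤ p a) ∧ ∑ a, p a = 1

/-- `k` is a channel (stochastic matrix): each row is a distribution. -/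
def IsChannel (k : α → β → ℝ) : Prop := ∀ a, IsDist (k a)

/-- Kullback–Leibler divergence (base 2) between distributions on a finite type. -/
noncomputable def klDiv2 (p q : α → ℝ) : ℝ := ∑ a, p a * Real.logb 2 (p a / q a)

/-- Channel composition: `(chComp lam mu) a c = ∑ b, lam b c * mu a b`. -/
def chComp (lam : β → γ → ℝ) (mu : α → β → ℝ) : α → γ → ℝ :=
  fun a c => ∑ b, lam b c * mu a b

/-- Conditional (weighted) KL divergence `D(k ∥ k' | pi)`. -/
noncomputable def condKL (pi : α → ℝ) (k k' : α → β → ℝ) : ℝ :=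
  ∑ a, pi a * klDiv2 (k a) (k' a)

/-- Weighted output deficiency `δ_o^π(μ,κ) = inf_λ D(κ ∥ λ∘μ | π)`. -/
noncomputable def defOut (pi : α → ℝ) (mu : α → γ → ℝ) (kap : α → β → ℝ) : ℝ :=
  sInf {d | ∃ lam : γ → β → ℝ, IsChannel lam ∧ d = condKL pi kap (chComp lam mu)}

/-- Risk of a fixed strategy `rho` used after observing through channel `nu`. -/
noncomputable def riskWith {S O A : Type*} [Fintype S] [Fintype O] [Fintype A]
    (pi : S → ℝ) (nu : S → O → ℝ) (rho : O → A → ℝ) (l : S → A → ℝ) : ℝ :=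
  ∑ s, pi s * ∑ a, chComp rho nu s a * l s a

/-- Optimal Bayes risk `R(π,ν,ℓ)`. -/
noncomputable def bayesRisk {S O A : Type*} [Fintype S] [Fintype O] [Fintype A]
    (pi : S → ℝ) (nu : S → O → ℝ) (l : S → A → ℝ) : ℝ :=
  sInf {r | ∃ rho : O → A → ℝ, IsChannel rho ∧ r = riskWith pi nu rho l}

/-- Total variation distance between distributions on a finite type. -/
noncomputable def tvDist (p q : α → ℝ) : ℝ := (∑ a, |p a - q a|) / 2

end Defs

section Joint
variable {S Y Z : Type*} [Fintype S] [Fintype Y] [Fintype Z]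

noncomputable def margSY (P : S × Y × Z → ℝ) : S × Y → ℝ := fun p => ∑ z, P (p.1, p.2, z)
noncomputable def margSZ (P : S × Y × Z → ℝ) : S × Z → ℝ := fun p => ∑ y, P (p.1, y, p.2)
noncomputable def margYZ (P : S × Y × Z → ℝ) : Y × Z → ℝ := fun p => ∑ s, P (s, p.1, p.2)
noncomputable def margS (P : S × Y × Z → ℝ) : S → ℝ := fun s => ∑ y, ∑ z, P (s, y, z)
noncomputable def margY (P : S × Y × Z → ℝ) : Y → ℝ := fun y => ∑ s, ∑ z, P (s, y, z)
noncomputable def margZ (P : S × Y × Z → ℝ) : Z → ℝ := fun z => ∑ s, ∑ y, P (s, y, z)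

/-- Mutual information `I(S;Y)` (base 2) of the (S,Y)-marginal of `P`. -/
noncomputable def miSY (P : S × Y × Z → ℝ) : ℝ :=
  ∑ s, ∑ y, margSY P (s, y) * Real.logb 2 (margSY P (s, y) / (margS P s * margY P y))

/-- Mutual information `I(S;Z)` (base 2) of the (S,Z)-marginal of `P`. -/
noncomputable def miSZ (P : S × Y × Z → ℝ) : ℝ :=
  ∑ s, ∑ z, margSZ P (s, z) * Real.logb 2 (margSZ P (s, z) / (margS P s * margZ P z))

/-- Conditional mutual information `I(S;Y|Z)` (base 2) under `P`. -/
noncomputable def condMI (P : S × Y × Z → ℝ) : ℝ :=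
  ∑ s, ∑ y, ∑ z,
    P (s, y, z) * Real.logb 2 (P (s, y, z) * margZ P z / (margSZ P (s, z) * margYZ P (y, z)))

/-- The feasible set `Δ_P`: joint distributions with the same (S,Y)- and (S,Z)-marginals as `P`. -/
def marginalPolytope (P : S × Y × Z → ℝ) : Set (S × Y × Z → ℝ) :=
  {Q | IsDist Q ∧ margSY Q = margSY P ∧ margSZ Q = margSZ P}

/-- Minimum-synergy unique information `UI(S;Y\Z) = inf_{Q ∈ Δ_P} I_Q(S;Y|Z)`. -/
noncomputable def UI (P : S × Y × Z → ℝ) : ℝ :=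
  sInf (condMI '' marginalPolytope P)

noncomputable def condYgivenS (P : S × Y × Z → ℝ) : S → Y → ℝ :=
  fun s y => margSY P (s, y) / margS P s
noncomputable def condZgivenS (P : S × Y × Z → ℝ) : S → Z → ℝ :=
  fun s z => margSZ P (s, z) / margS P s
noncomputable def condSgivenY (P : S × Y × Z → ℝ) : Y → S → ℝ :=
  fun y s => margSY P (s, y) / margY P y
noncomputable def condSgivenZ (P : S × Y × Z → ℝ) : Z → S → ℝ :=
  fun z s => margSZ P (s, z) / margZ P z

/-- Weighted input deficiency `δ_i^π(μ̄,κ̄) = inf_{λ̄} ∑_y π_Y(y) D(κ̄_y ∥ (μ̄∘λ̄)_y)`. -/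
noncomputable def defIn {Y' Z' S' : Type*} [Fintype Y'] [Fintype Z'] [Fintype S']
    (piY : Y' → ℝ) (mub : Z' → S' → ℝ) (kab : Y' → S' → ℝ) : ℝ :=
  sInf {d | ∃ lb : Y' → Z' → ℝ, IsChannel lb ∧
    d = ∑ y, piY y * klDiv2 (kab y) (chComp mub lb y)}

end Joint

/-!
Under `Q`, `I(S;Y|Z) · log 2` is the Kullback–Leibler divergence of `Q` from the Markov-chain law
`Q_{SZ} Q_{YZ} / Q_Z`, which has the same total mass; by Gibbs' inequality it is nonnegative and
vanishes exactly when `S` and `Y` are conditionally independent given `Z`. The identity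
`I(S;Y|Z) · log 2 = H(S,Z) + H(Y,Z) - H(S,Y,Z) - H(Z)` makes it continuous, so its infimum over the
compact polytope `Δ_P` is attained: `UI = 0` iff some `Q ∈ Δ_P` makes `S - Z - Y` a Markov chain.
Such a `Q` factors as `P_{SZ}(s,z) λ_z(y)` with `λ = Q_{Y|Z}`, and `Q_{SY} = P_{SY}` is then exactly
the degradation identity; conversely a degrading channel `λ` defines such a `Q` in `Δ_P`.
-/

open InformationTheory

section Gibbs
variable {ι : Type*} [Fintype ι]

lemma mul_log_div_sub_sub_eq_mul_klFun (a : ℝ) {b : ℝ} (hb : 0 < b) :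
    a * log (a / b) - (a - b) = b * klFun (a / b) := by
  unfold klFun
  field_simp
  ring

lemma mul_log_div_sub_sub_nonneg {a b : ℝ} (ha : 0 ≤ a) (hb : 0 ≤ b) (hab : b = 0 → a = 0) :
    0 ≤ a * log (a / b) - (a - b) := by
  rcases hb.eq_or_lt with rfl | hb
  · simp [hab rfl]
  · rw [mul_log_div_sub_sub_eq_mul_klFun a hb]
    exact mul_nonneg hb.le (klFun_nonneg (div_nonneg ha hb.le))

lemma eq_of_mul_log_div_sub_sub_eq_zero {a b : ℝ} (ha : 0 ≤ a) (hb : 0 ≤ b)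
    (hab : b = 0 → a = 0) (h : a * log (a / b) - (a - b) = 0) : a = b := by
  rcases hb.eq_or_lt with rfl | hb
  · exact hab rfl
  · rw [mul_log_div_sub_sub_eq_mul_klFun a hb, mul_eq_zero,
      klFun_eq_zero_iff (div_nonneg ha hb.le), div_eq_one_iff_eq hb.ne'] at h
    exact h.resolve_left hb.ne'

variable {a b : ι → ℝ}

lemma sum_mul_log_div_eq_sum_sub_sub (hsum : ∑ i, a i = ∑ i, b i) :
    ∑ i, a i * log (a i / b i) = ∑ i, (a i * log (a i / b i) - (a i - b i)) := by
  rw [Finset.sum_sub_distrib, Finset.sum_sub_distrib, hsum, sub_self, sub_zero]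

theorem sum_mul_log_div_nonneg (ha : ∀ i, 0 ≤ a i) (hb : ∀ i, 0 ≤ b i)
    (hab : ∀ i, b i = 0 → a i = 0) (hsum : ∑ i, a i = ∑ i, b i) :
    0 ≤ ∑ i, a i * log (a i / b i) := by
  rw [sum_mul_log_div_eq_sum_sub_sub hsum]
  exact Finset.sum_nonneg fun i _ => mul_log_div_sub_sub_nonneg (ha i) (hb i) (hab i)

theorem eq_of_sum_mul_log_div_eq_zero (ha : ∀ i, 0 ≤ a i) (hb : ∀ i, 0 ≤ b i)
    (hab : ∀ i, b i = 0 → a i = 0) (hsum : ∑ i, a i = ∑ i, b i)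
    (h : ∑ i, a i * log (a i / b i) = 0) : a = b := by
  rw [sum_mul_log_div_eq_sum_sub_sub hsum, Finset.sum_eq_zero_iff_of_nonneg
    fun i _ => mul_log_div_sub_sub_nonneg (ha i) (hb i) (hab i)] at h
  exact funext fun i =>
    eq_of_mul_log_div_sub_sub_eq_zero (ha i) (hb i) (hab i) (h i (Finset.mem_univ i))

end Gibbs

section Marginals
variable {S Y Z : Type*} {Q : S × Y × Z → ℝ}

lemma margZ_eq_sum_margSZ [Fintype S] [Fintype Y] (Q : S × Y × Z → ℝ) (z : Z) :
    margZ Q z = ∑ s, margSZ Q (s, z) :=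
  rfl

lemma margZ_eq_sum_margYZ [Fintype S] [Fintype Y] (Q : S × Y × Z → ℝ) (z : Z) :
    margZ Q z = ∑ y, margYZ Q (y, z) :=
  Finset.sum_comm

variable [Fintype S] [Fintype Y] [Fintype Z]

lemma sum_margSZ_mul (Q : S × Y × Z → ℝ) (g : S × Z → ℝ) :
    ∑ p, margSZ Q p * g p = ∑ x, Q x * g (x.1, x.2.2) := by
  simp only [Fintype.sum_prod_type, margSZ, Finset.sum_mul]
  exact Finset.sum_congr rfl fun s _ => Finset.sum_comm

lemma sum_margYZ_mul (Q : S × Y × Z → ℝ) (g : Y × Z → ℝ) :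
    ∑ p, margYZ Q p * g p = ∑ x, Q x * g x.2 := by
  simp only [Fintype.sum_prod_type, margYZ, Finset.sum_mul]
  conv_rhs => rw [Finset.sum_comm]
  exact Finset.sum_congr rfl fun y _ => Finset.sum_comm

lemma sum_margZ_mul (Q : S × Y × Z → ℝ) (g : Z → ℝ) :
    ∑ z, margZ Q z * g z = ∑ x, Q x * g x.2.2 := by
  simp only [margZ_eq_sum_margSZ, Finset.sum_mul]
  rw [Finset.sum_comm, ← Fintype.sum_prod_type' (fun s z => margSZ Q (s, z) * g z)]
  exact sum_margSZ_mul Q (g ·.2)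

lemma sum_margSZ (Q : S × Y × Z → ℝ) : ∑ p, margSZ Q p = ∑ x, Q x := by
  simpa using sum_margSZ_mul Q fun _ => 1

end Marginals

section Nonneg
variable {S Y Z : Type*} {Q : S × Y × Z → ℝ}

lemma margSZ_nonneg [Fintype Y] (hQ : ∀ x, 0 ≤ Q x) (p : S × Z) : 0 ≤ margSZ Q p :=
  Finset.sum_nonneg fun _ _ => hQ _

lemma margYZ_nonneg [Fintype S] (hQ : ∀ x, 0 ≤ Q x) (p : Y × Z) : 0 ≤ margYZ Q p :=
  Finset.sum_nonneg fun _ _ => hQ _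

lemma le_margSZ [Fintype Y] (hQ : ∀ x, 0 ≤ Q x) (s : S) (y : Y) (z : Z) :
    Q (s, y, z) ≤ margSZ Q (s, z) :=
  Finset.single_le_sum (fun y _ => hQ (s, y, z)) (Finset.mem_univ y)

lemma le_margYZ [Fintype S] (hQ : ∀ x, 0 ≤ Q x) (s : S) (y : Y) (z : Z) :
    Q (s, y, z) ≤ margYZ Q (y, z) :=
  Finset.single_le_sum (fun s _ => hQ (s, y, z)) (Finset.mem_univ s)

variable [Fintype S] [Fintype Y]

lemma margSZ_le_margZ (hQ : ∀ x, 0 ≤ Q x) (s : S) (z : Z) : margSZ Q (s, z) ≤ margZ Q z :=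
  Finset.single_le_sum (fun s _ => margSZ_nonneg hQ (s, z)) (Finset.mem_univ s)

lemma margSZ_eq_zero_of_margZ_eq_zero (hQ : ∀ x, 0 ≤ Q x) {z : Z} (hz : margZ Q z = 0)
    (s : S) : margSZ Q (s, z) = 0 :=
  le_antisymm (hz ▸ margSZ_le_margZ hQ s z) (margSZ_nonneg hQ _)

lemma eq_zero_of_margZ_eq_zero (hQ : ∀ x, 0 ≤ Q x) {z : Z} (hz : margZ Q z = 0)
    (s : S) (y : Y) : Q (s, y, z) = 0 :=
  le_antisymm (margSZ_eq_zero_of_margZ_eq_zero hQ hz s ▸ le_margSZ hQ s y z) (hQ _)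

end Nonneg

section CondMI
variable {S Y Z : Type*} {Q : S × Y × Z → ℝ}

noncomputable def markovProj [Fintype S] [Fintype Y] (Q : S × Y × Z → ℝ) : S × Y × Z → ℝ :=
  fun x => margSZ Q (x.1, x.2.2) * margYZ Q x.2 / margZ Q x.2.2

def CondIndep [Fintype S] [Fintype Y] (Q : S × Y × Z → ℝ) : Prop :=
  ∀ s y z, Q (s, y, z) * margZ Q z = margSZ Q (s, z) * margYZ Q (y, z)

section
variable [Fintype S] [Fintype Y]

lemma markovProj_nonneg (hQ : ∀ x, 0 ≤ Q x) (x : S × Y × Z) : 0 ≤ markovProj Q x :=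
  div_nonneg (mul_nonneg (margSZ_nonneg hQ _) (margYZ_nonneg hQ _))
    (Finset.sum_nonneg fun _ _ => Finset.sum_nonneg fun _ _ => hQ _)

lemma eq_zero_of_markovProj_eq_zero (hQ : ∀ x, 0 ≤ Q x) {x : S × Y × Z}
    (h : markovProj Q x = 0) : Q x = 0 := by
  obtain ⟨s, y, z⟩ := x
  rcases div_eq_zero_iff.1 h with h | h
  · rcases mul_eq_zero.1 h with h | h
    · exact le_antisymm (h ▸ le_margSZ hQ s y z) (hQ _)
    · exact le_antisymm (h ▸ le_margYZ hQ s y z) (hQ _)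
  · exact eq_zero_of_margZ_eq_zero hQ h s y

lemma condIndep_of_eq_markovProj (hQ : ∀ x, 0 ≤ Q x) (h : Q = markovProj Q) : CondIndep Q := by
  intro s y z
  by_cases hz : margZ Q z = 0
  · rw [hz, margSZ_eq_zero_of_margZ_eq_zero hQ hz, mul_zero, zero_mul]
  · rw [congrFun h (s, y, z), markovProj, div_mul_cancel₀ _ hz]

end

variable [Fintype S] [Fintype Y] [Fintype Z]

lemma sum_markovProj (Q : S × Y × Z → ℝ) : ∑ x, markovProj Q x = ∑ x, Q x :=
  calc ∑ x, markovProj Q x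
      = ∑ z, (∑ s, margSZ Q (s, z)) * (∑ y, margYZ Q (y, z)) / margZ Q z := by
        simp only [Fintype.sum_prod_type, markovProj, Finset.sum_mul, Finset.mul_sum,
          Finset.sum_div]
        exact (Finset.sum_congr rfl fun s _ => Finset.sum_comm).trans
          (Finset.sum_comm.trans (Finset.sum_congr rfl fun z _ => Finset.sum_comm))
    _ = ∑ z, margZ Q z := by
        simp only [← margZ_eq_sum_margSZ, ← margZ_eq_sum_margYZ, mul_self_div_self]
    _ = ∑ x, Q x := by simpa using sum_margZ_mul Q fun _ => 1

lemma condMI_eq_sum_mul_log_div_markovProj (Q : S × Y × Z → ℝ) :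
    condMI Q = (∑ x, Q x * log (Q x / markovProj Q x)) / log 2 := by
  simp only [condMI, Fintype.sum_prod_type, Finset.sum_div]
  refine Finset.sum_congr rfl fun s _ => Finset.sum_congr rfl fun y _ =>
    Finset.sum_congr rfl fun z _ => ?_
  rw [markovProj, div_div_eq_mul_div, Real.logb]
  ring

lemma condMI_nonneg (hQ : ∀ x, 0 ≤ Q x) : 0 ≤ condMI Q := by
  rw [condMI_eq_sum_mul_log_div_markovProj]
  exact div_nonneg (sum_mul_log_div_nonneg hQ (markovProj_nonneg hQ)
    (fun _ => eq_zero_of_markovProj_eq_zero hQ) (sum_markovProj Q).symm) (log_nonneg one_le_two)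

lemma condMI_eq_zero_of_condIndep (h : CondIndep Q) : condMI Q = 0 := by
  refine Finset.sum_eq_zero fun s _ => Finset.sum_eq_zero fun y _ =>
    Finset.sum_eq_zero fun z _ => ?_
  -- the term becomes `Q * logb 2 (t / t)`, which is `0` also at `t = 0` as `t / 0 = 0`
  rw [← h s y z]
  rcases eq_or_ne (Q (s, y, z) * margZ Q z) 0 with h0 | h0
  · simp [h0]
  · simp [div_self h0]

lemma condMI_eq_zero_iff (hQ : ∀ x, 0 ≤ Q x) : condMI Q = 0 ↔ CondIndep Q := by
  refine ⟨fun h => condIndep_of_eq_markovProj hQ ?_, condMI_eq_zero_of_condIndep⟩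
  rw [condMI_eq_sum_mul_log_div_markovProj, div_eq_zero_iff,
    or_iff_left (log_pos one_lt_two).ne'] at h
  exact eq_of_sum_mul_log_div_eq_zero hQ (markovProj_nonneg hQ)
    (fun _ => eq_zero_of_markovProj_eq_zero hQ) (sum_markovProj Q).symm h

end CondMI

noncomputable def entropy {α : Type*} [Fintype α] (p : α → ℝ) : ℝ := ∑ a, negMulLog (p a)

lemma entropy_eq_neg_sum {α : Type*} [Fintype α] (p : α → ℝ) :
    entropy p = -∑ a, p a * log (p a) := by
  simp [entropy, negMulLog, Finset.sum_neg_distrib]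

@[fun_prop]
lemma continuous_entropy {α : Type*} [Fintype α] : Continuous (entropy : (α → ℝ) → ℝ) := by
  unfold entropy
  fun_prop

section Continuity
variable {S Y Z : Type*}

@[fun_prop]
lemma continuous_margSY [Fintype Z] : Continuous (margSY : (S × Y × Z → ℝ) → S × Y → ℝ) := by
  unfold margSY; fun_prop

@[fun_prop]
lemma continuous_margSZ [Fintype Y] : Continuous (margSZ : (S × Y × Z → ℝ) → S × Z → ℝ) := by
  unfold margSZ; fun_prop

@[fun_prop]
lemma continuous_margYZ [Fintype S] : Continuous (margYZ : (S × Y × Z → ℝ) → Y × Z → ℝ) := by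
  unfold margYZ; fun_prop

@[fun_prop]
lemma continuous_margZ [Fintype S] [Fintype Y] : Continuous (margZ : (S × Y × Z → ℝ) → Z → ℝ) := by
  unfold margZ; fun_prop

variable [Fintype S] [Fintype Y] [Fintype Z] {Q : S × Y × Z → ℝ}

lemma condMI_eq_entropy (hQ : ∀ x, 0 ≤ Q x) :
    condMI Q =
      (entropy (margSZ Q) + entropy (margYZ Q) - entropy Q - entropy (margZ Q)) / log 2 := by
  have hterm : ∀ x, Q x * log (Q x / markovProj Q x) = Q x * log (Q x)
      - Q x * log (margSZ Q (x.1, x.2.2)) - Q x * log (margYZ Q x.2)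
      + Q x * log (margZ Q x.2.2) := by
    rintro ⟨s, y, z⟩
    rcases (hQ (s, y, z)).eq_or_lt with h0 | hpos
    · simp [← h0]
    have hSZ := hpos.trans_le (le_margSZ hQ s y z)
    have hYZ := hpos.trans_le (le_margYZ hQ s y z)
    have hZ := hSZ.trans_le (margSZ_le_margZ hQ s z)
    rw [markovProj, log_div hpos.ne' (by positivity), log_div (by positivity) hZ.ne',
      log_mul hSZ.ne' hYZ.ne']
    ring
  rw [condMI_eq_sum_mul_log_div_markovProj, entropy_eq_neg_sum, entropy_eq_neg_sum,
    entropy_eq_neg_sum, entropy_eq_neg_sum, sum_margSZ_mul Q (fun p => log (margSZ Q p)),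
    sum_margYZ_mul Q (fun p => log (margYZ Q p)), sum_margZ_mul Q (fun z => log (margZ Q z))]
  simp only [hterm, Finset.sum_add_distrib, Finset.sum_sub_distrib]
  ring

lemma continuousOn_condMI : ContinuousOn condMI {Q : S × Y × Z → ℝ | ∀ x, 0 ≤ Q x} := by
  refine ContinuousOn.congr (Continuous.continuousOn ?_) fun Q hQ => condMI_eq_entropy hQ
  fun_prop

end Continuity

section UI
variable {S Y Z : Type*} [Fintype S] [Fintype Y] [Fintype Z] {P : S × Y × Z → ℝ}

lemma marginalPolytope_subset_Icc (P : S × Y × Z → ℝ) :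
    marginalPolytope P ⊆ Set.Icc 0 1 := fun _ ⟨⟨hQ0, hQ1⟩, _⟩ =>
  ⟨hQ0, fun x => (Finset.single_le_sum (fun x _ => hQ0 x) (Finset.mem_univ x)).trans_eq hQ1⟩

lemma isClosed_marginalPolytope (P : S × Y × Z → ℝ) : IsClosed (marginalPolytope P) := by
  change IsClosed (Set.Ici 0 ∩ {Q | ∑ x, Q x = 1} ∩
    ({Q | margSY Q = margSY P} ∩ {Q | margSZ Q = margSZ P}))
  exact (isClosed_Ici.inter (isClosed_eq (by fun_prop) continuous_const)).inter
    ((isClosed_eq continuous_margSY continuous_const).inter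
      (isClosed_eq continuous_margSZ continuous_const))

lemma isCompact_marginalPolytope (P : S × Y × Z → ℝ) : IsCompact (marginalPolytope P) :=
  isCompact_Icc.of_isClosed_subset (isClosed_marginalPolytope P) (marginalPolytope_subset_Icc P)

lemma UI_mem_image (hP : IsDist P) : UI P ∈ condMI '' marginalPolytope P :=
  ((isCompact_marginalPolytope P).image_of_continuousOn
    (continuousOn_condMI.mono fun _ hQ => hQ.1.1)).sInf_mem ⟨_, P, ⟨hP, rfl, rfl⟩, rfl⟩

lemma UI_eq_zero_iff (hP : IsDist P) :
    UI P = 0 ↔ ∃ Q ∈ marginalPolytope P, condMI Q = 0 := by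
  refine ⟨fun h => h ▸ UI_mem_image hP, fun ⟨Q, hQ, h0⟩ => IsLeast.csInf_eq ⟨⟨Q, hQ, h0⟩, ?_⟩⟩
  rintro _ ⟨Q', hQ', rfl⟩
  exact condMI_nonneg hQ'.1.1

end UI

section Channel

lemma exists_isChannel_mul_sum {β γ : Type*} [Fintype γ] [Nonempty γ] {f : β → γ → ℝ}
    (hf : ∀ b c, 0 ≤ f b c) :
    ∃ lam : β → γ → ℝ, IsChannel lam ∧ ∀ b c, f b c = lam b c * ∑ c', f b c' := by
  classical
  refine ⟨fun b c => if ∑ c', f b c' = 0 then (Fintype.card γ : ℝ)⁻¹ else f b c / ∑ c', f b c',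
    fun b => ?_, fun b c => ?_⟩
  · by_cases hb : ∑ c', f b c' = 0
    · simp only [hb, if_true]
      refine ⟨fun _ => by positivity, ?_⟩
      simp [Finset.card_univ]
    · simp only [hb, if_false]
      exact ⟨fun c => div_nonneg (hf b c) (Finset.sum_nonneg fun c _ => hf b c),
        by rw [← Finset.sum_div, div_self hb]⟩
  · by_cases hb : ∑ c', f b c' = 0
    · rw [hb, mul_zero]
      exact (Finset.sum_eq_zero_iff_of_nonneg fun c _ => hf b c).1 hb c (Finset.mem_univ c)
    · dsimp only
      rw [if_neg hb, div_mul_cancel₀ _ hb]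

end Channel

section Degradation
variable {S Y Z : Type*}

def markovJoint (R : S × Z → ℝ) (lam : Z → Y → ℝ) : S × Y × Z → ℝ :=
  fun x => lam x.2.2 x.2.1 * R (x.1, x.2.2)

variable {R : S × Z → ℝ} {lam : Z → Y → ℝ}

lemma margSZ_markovJoint [Fintype Y] (hlam : IsChannel lam) : margSZ (markovJoint R lam) = R :=
  funext fun p => by simp only [margSZ, markovJoint, ← Finset.sum_mul, (hlam p.2).2, one_mul]

lemma margYZ_markovJoint [Fintype S] (y : Y) (z : Z) :
    margYZ (markovJoint R lam) (y, z) = lam z y * ∑ s, R (s, z) := by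
  simp only [margYZ, markovJoint, Finset.mul_sum]

lemma condIndep_markovJoint [Fintype S] [Fintype Y] (hlam : IsChannel lam) :
    CondIndep (markovJoint R lam) := by
  intro s y z
  rw [margZ_eq_sum_margSZ, margSZ_markovJoint hlam, margYZ_markovJoint, markovJoint]
  ring

lemma markovJoint_mem_marginalPolytope [Fintype S] [Fintype Y] [Fintype Z] {P : S × Y × Z → ℝ}
    (hP : IsDist P) (hlam : IsChannel lam)
    (hdeg : ∀ s y, margSY P (s, y) = ∑ z, lam z y * margSZ P (s, z)) :
    markovJoint (margSZ P) lam ∈ marginalPolytope P := by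
  refine ⟨⟨fun x => mul_nonneg ((hlam _).1 _) (margSZ_nonneg hP.1 _), ?_⟩,
    funext fun p => (hdeg p.1 p.2).symm, margSZ_markovJoint hlam⟩
  rw [← sum_margSZ, margSZ_markovJoint hlam, sum_margSZ, hP.2]

lemma eq_mul_margSZ_of_condIndep [Fintype S] [Fintype Y] {Q : S × Y × Z → ℝ}
    (hQ : ∀ x, 0 ≤ Q x) (hci : CondIndep Q)
    (hlam : ∀ y z, margYZ Q (y, z) = lam z y * margZ Q z) (s : S) (y : Y) (z : Z) :
    Q (s, y, z) = lam z y * margSZ Q (s, z) := by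
  by_cases hz : margZ Q z = 0
  · rw [eq_zero_of_margZ_eq_zero hQ hz, margSZ_eq_zero_of_margZ_eq_zero hQ hz, mul_zero]
  · apply mul_right_cancel₀ hz
    rw [hci, hlam]
    ring

lemma exists_degradation_of_condIndep [Fintype S] [Fintype Y] [Fintype Z] [Nonempty Y]
    {P Q : S × Y × Z → ℝ} (hQ : Q ∈ marginalPolytope P) (hci : CondIndep Q) :
    ∃ lam : Z → Y → ℝ, IsChannel lam ∧
      ∀ s y, margSY P (s, y) = ∑ z, lam z y * margSZ P (s, z) := by
  obtain ⟨⟨hQ0, -⟩, hSY, hSZ⟩ := hQ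
  obtain ⟨lam, hlam, hfac⟩ :=
    exists_isChannel_mul_sum (f := fun z y => margYZ Q (y, z)) fun _ _ => margYZ_nonneg hQ0 _
  refine ⟨lam, hlam, fun s y => ?_⟩
  rw [← hSY, ← hSZ]
  refine Finset.sum_congr rfl fun z _ => eq_mul_margSZ_of_condIndep hQ0 hci (fun y z => ?_) s y z
  rw [hfac, margZ_eq_sum_margYZ]

end Degradation

lemma condYgivenS_eq_chComp_iff {S Y Z : Type*} [Fintype S] [Fintype Y] [Fintype Z]
    {P : S × Y × Z → ℝ} {s : S} (hs : 0 < margS P s) (lam : Z → Y → ℝ) (y : Y) :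
    condYgivenS P s y = chComp lam (condZgivenS P) s y ↔
      margSY P (s, y) = ∑ z, lam z y * margSZ P (s, z) := by
  simp only [condYgivenS, chComp, condZgivenS, mul_div_assoc', ← Finset.sum_div]
  exact div_left_inj' hs.ne'

theorem UI_eq_zero_iff_degradation_general
    {S Y Z : Type*} [Fintype S] [Fintype Y] [Fintype Z]
    [Nonempty Y]
    (P : S × Y × Z → ℝ) (hP : IsDist P) (hfull : ∀ s, 0 < margS P s) :
    UI P = 0 ↔ ∃ lam : Z → Y → ℝ, IsChannel lam ∧
      ∀ s y, condYgivenS P s y = chComp lam (condZgivenS P) s y := by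
  simp only [condYgivenS_eq_chComp_iff (hfull _), UI_eq_zero_iff hP]
  constructor
  · rintro ⟨Q, hQ, hQ0⟩
    exact exists_degradation_of_condIndep hQ ((condMI_eq_zero_iff hQ.1.1).1 hQ0)
  · rintro ⟨lam, hlam, hdeg⟩
    have hQ := markovJoint_mem_marginalPolytope hP hlam hdeg
    exact ⟨_, hQ, (condMI_eq_zero_iff hQ.1.1).2 (condIndep_markovJoint hlam)⟩

/-- `UI` vanishes iff `Y` is a degradation of `Z` with respect to `S`. -/
theorem UI_eq_zero_iff_degradation
    {S Y Z : Type*} [Fintype S] [Fintype Y] [Fintype Z]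
    [Nonempty S] [Nonempty Y] [Nonempty Z]
    (P : S × Y × Z → ℝ) (hP : IsDist P) (hfull : ∀ s, 0 < margS P s) :
    UI P = 0 ↔ ∃ lam : Z → Y → ℝ, IsChannel lam ∧
      ∀ s y, condYgivenS P s y = chComp lam (condZgivenS P) s y :=
  UI_eq_zero_iff_degradation_general P hP hfull
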